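/- Let r_x, r_y, r_z ∈ ℝ with r_x² + r_y² + r_z² ≤ 1. Consider the 2×2 complex Pauli matrices X = !![0,1;1,0], Y = !![0,−i;i,0], Z = !![1,0;0,−1], the qubit density matrix ρ = (1/2)·(1 + r_x·X + r_y·Y + r_z·Z), the ℤ₂-twirling map 𝒢(M) = (1/2)·(M + X·M·X), and the Z-dephasing channel Δ(M) = (1/2)·(M + Z·M·Z). Define the second Rényi asymmetry A⁽²⁾(M) = log(Re Tr(M·M)) − log(Re Tr(𝒢(M)·𝒢(M))). Then the dephasing channel strictly increases the second Rényi asymmetry, A⁽²⁾(Δ(ρ)) > A⁽²⁾(ρ), if and only if r_x²·r_z² > r_y². In particular, the second Rényi asymmetry is not monotone under ℤ₂-covariant operations. -/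
import Mathlib


open Matrix

noncomputable section

/-- The Pauli X matrix. -/
def pauliX : Matrix (Fin 2) (Fin 2) ℂ := !![0, 1; 1, 0]

/-- The Pauli Y matrix. -/
def pauliY : Matrix (Fin 2) (Fin 2) ℂ := !![0, -Complex.I; Complex.I, 0]

/-- The Pauli Z matrix. -/
def pauliZ : Matrix (Fin 2) (Fin 2) ℂ := !![1, 0; 0, -1]

/-- The qubit Bloch state with Bloch vector `(rx, ry, rz)`. -/
def blochState (rx ry rz : ℝ) : Matrix (Fin 2) (Fin 2) ℂ :=
  ((1 : ℂ) / 2) • (1 + (rx : ℂ) • pauliX + (ry : ℂ) • pauliY + (rz : ℂ) • pauliZ)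

/-- The `ℤ₂`-twirling map generated by Pauli X. -/
def twirlX (M : Matrix (Fin 2) (Fin 2) ℂ) : Matrix (Fin 2) (Fin 2) ℂ :=
  ((1 : ℂ) / 2) • (M + pauliX * M * pauliX)

/-- The Z-dephasing channel. -/
def dephaseZ (M : Matrix (Fin 2) (Fin 2) ℂ) : Matrix (Fin 2) (Fin 2) ℂ :=
  ((1 : ℂ) / 2) • (M + pauliZ * M * pauliZ)

/-- The second Rényi asymmetry with respect to the `ℤ₂` symmetry generated by Pauli X. -/
def renyi2Asymmetry (M : Matrix (Fin 2) (Fin 2) ℂ) : ℝ :=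
  Real.log ((M * M).trace.re) - Real.log ((twirlX M * twirlX M).trace.re)

lemma bloch_eq (rx ry rz : ℝ) : blochState rx ry rz =
    !![((1:ℂ) + rz)/2, ((rx:ℂ) - ry*Complex.I)/2; ((rx:ℂ) + ry*Complex.I)/2, ((1:ℂ) - rz)/2] := by
  ext i j
  fin_cases i <;> fin_cases j <;>
    simp [blochState, pauliX, pauliY, pauliZ, Matrix.one_apply] <;> ring

lemma twirl_eq (a b c d : ℂ) : twirlX !![a, b; c, d] = !![(a+d)/2, (b+c)/2; (b+c)/2, (a+d)/2] := by
  ext i j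
  fin_cases i <;> fin_cases j <;>
    simp [twirlX, pauliX, Matrix.mul_apply, Fin.sum_univ_two] <;> ring

lemma deph_eq (a b c d : ℂ) : dephaseZ !![a, b; c, d] = !![a, 0; 0, d] := by
  ext i j
  fin_cases i <;> fin_cases j <;>
    simp [dephaseZ, pauliZ, Matrix.mul_apply, Fin.sum_univ_two] <;> ring

lemma tr_sq (a b c d : ℂ) : (!![a, b; c, d] * !![a, b; c, d]).trace = a*a + b*c + c*b + d*d := by
  simp [Matrix.trace, Matrix.mul_apply, Fin.sum_univ_two]
  ring

lemma tA (rx ry rz : ℝ) :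
    ((blochState rx ry rz * blochState rx ry rz).trace.re) = (1 + (rx^2+ry^2+rz^2))/2 := by
  rw [bloch_eq, tr_sq]
  simp [Complex.ext_iff, Complex.add_re, Complex.mul_re, Complex.div_ofNat_re,
    Complex.div_ofNat_im]
  ring

lemma tB (rx ry rz : ℝ) :
    ((twirlX (blochState rx ry rz) * twirlX (blochState rx ry rz)).trace.re)
      = (1 + rx^2)/2 := by
  rw [bloch_eq, twirl_eq, tr_sq]
  simp [Complex.ext_iff, Complex.add_re, Complex.mul_re, Complex.div_ofNat_re,
    Complex.div_ofNat_im]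
  ring

lemma tC (rx ry rz : ℝ) :
    ((dephaseZ (blochState rx ry rz) * dephaseZ (blochState rx ry rz)).trace.re)
      = (1 + rz^2)/2 := by
  rw [bloch_eq, deph_eq, tr_sq]
  simp [Complex.ext_iff, Complex.add_re, Complex.mul_re, Complex.div_ofNat_re,
    Complex.div_ofNat_im]
  ring

lemma tD (rx ry rz : ℝ) :
    ((twirlX (dephaseZ (blochState rx ry rz)) * twirlX (dephaseZ (blochState rx ry rz))).trace.re)
      = 1/2 := by
  rw [bloch_eq, deph_eq, twirl_eq, tr_sq]
  simp [Complex.ext_iff, Complex.add_re, Complex.mul_re, Complex.div_ofNat_re,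
    Complex.div_ofNat_im]
  ring

/-- **The `Z`-dephasing channel (which is `ℤ₂`-covariant) strictly increases the second
Rényi asymmetry exactly when `r_x²·r_z² > r_y²`; hence the second Rényi asymmetry is not a
resource monotone.** -/
theorem renyi2_asymmetry_not_monotone (rx ry rz : ℝ)
    (h : rx ^ 2 + ry ^ 2 + rz ^ 2 ≤ 1) :
    renyi2Asymmetry (dephaseZ (blochState rx ry rz)) > renyi2Asymmetry (blochState rx ry rz)
      ↔ rx ^ 2 * rz ^ 2 > ry ^ 2 := by
  have h1 : (0:ℝ) < 1 + rz^2 := by positivity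
  have h2 : (0:ℝ) < 1 + rx^2 := by positivity
  have h3 : (0:ℝ) < 1 + (rx^2+ry^2+rz^2) := by positivity
  simp only [renyi2Asymmetry, tA, tB, tC, tD]
  rw [show (1:ℝ)/2 = 1/2 from rfl,
    Real.log_div h1.ne' two_ne_zero, Real.log_div h3.ne' two_ne_zero,
    Real.log_div h2.ne' two_ne_zero, Real.log_div one_ne_zero two_ne_zero,
    Real.log_one]
  rw [gt_iff_lt, show (Real.log (1+rz^2) - Real.log 2) - (0 - Real.log 2) = Real.log (1+rz^2)
    by ring, sub_sub_sub_cancel_right, sub_lt_iff_lt_add, ← Real.log_mul h1.ne' h2.ne',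
    Real.log_lt_log_iff h3]
  all_goals first | positivity | (constructor <;> intro hx <;> nlinarith)

end
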